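/- Let d ≥ 2 be an integer, ℓ ∈ ℕ_d, and x ∈ (−1,1). Then Σ_{m ∈ ℕ_{d−1}, m ≤ ℓ} (1−x²)^{−(d−2)/2} Y_{ℓ,m}(x)² · D_{d−1}(m)/σ_{d−1} = D_d(ℓ)/σ_d, where for an integer k ≥ 1 and m ∈ ℕ_k with m' = m − (k−1)/2 ∈ ℕ one sets D_k(m) = binom(m'+k, m') − binom(m'+k−2, m'−2) (with the convention that a binomial coefficient with a negative lower index is zero), and σ_k = (k+1)π^{(k+1)/2}/Γ((k+3)/2). -/

import Mathlib

/-!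
On `(-1, 1)` Leibniz' rule expands Rodrigues' formula into an explicit polynomial `P_j^α`
(`jacobiPoly`). It obeys the raising rule `(P_{j+1}^α)' = (2α + j + 2)/2 · P_j^{α+1}` and, since
`(1 - x²)^α P_j^α` is up to a constant the `j`-th derivative of `(1 - x²)^(α + j)`, the lowering
rule `((1 - x²)^α P_j^α)' = -2(j + 1) (1 - x²)^(α - 1) P_{j+1}^{α-1}`.

With `γ = (d - 2)/2` and `ℓ = n + (d - 1)/2`, the `b`-th summand is
`K_b (1 - x²)^b P_{n-b}^{b+γ}(x)²`. The two rules make its derivative a difference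
`H_{b+1} - H_b` as soon as the `K_b` satisfy a two-term recurrence, which
`K_b = c_{ℓ,b+γ}² D_{d-1}(b) / σ_{d-1}` does by the functional equation of `Γ`. Hence the sum is
constant on `(-1, 1)`; at `x = 1` only `b = 0` survives, and Legendre's duplication formula turns
`K_0 P_n^γ(1)²` into `D_d(n) / σ_d`.
-/

open Real Set

/-- Jacobi polynomial `P_j^{(α,α)}` via Rodrigues' formula. -/
noncomputable def jacobiP (j : ℕ) (α : ℝ) (x : ℝ) : ℝ :=
  ((-1 : ℝ) ^ j / (2 ^ j * (Nat.factorial j : ℝ))) * (1 - x ^ 2) ^ (-α) *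
    iteratedDeriv j (fun t : ℝ => (1 - t ^ 2) ^ (α + (j : ℝ))) x

/-- The normalization constant `c_{ℓm}`. -/
noncomputable def cConst (ℓ m : ℝ) : ℝ :=
  Real.sqrt (ℓ * Real.Gamma (ℓ - m + 1/2) * Real.Gamma (ℓ + m + 1/2)) /
    ((2 : ℝ) ^ m * Real.Gamma (ℓ + 1/2))

/-- The function `Y_{ℓ,m}`. -/
noncomputable def Yfun (ℓ m x : ℝ) : ℝ :=
  cConst ℓ m * (1 - x ^ 2) ^ (m / 2) * jacobiP ⌊ℓ - m - 1/2⌋₊ m x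

/-- Membership in the index set `I = {(ℓ,m) ∈ (ℕ/2)² : ℓ - m - 1/2 ∈ ℕ}`. -/
def memI (ℓ m : ℝ) : Prop :=
  (∃ n : ℕ, m = (n : ℝ) / 2) ∧ (∃ j : ℕ, ℓ - m - 1/2 = (j : ℝ))

/-- `b_{ℓ,m} = m / ℓ`. -/
noncomputable def bPt (ℓ m : ℝ) : ℝ := m / ℓ

/-- `a_{ℓ,m} = (1 - b_{ℓ,m}²)^{1/2}`. -/
noncomputable def aPt (ℓ m : ℝ) : ℝ := Real.sqrt (1 - bPt ℓ m ^ 2)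

/-- Membership in `ℕ_k = ℕ + (k-1)/2`. -/
def memNk (k : ℕ) (t : ℝ) : Prop := ∃ n : ℕ, t = (n : ℝ) + ((k : ℝ) - 1) / 2

/-- Membership in `I_d`. -/
def memId (d : ℕ) (ℓ m : ℝ) : Prop := memNk d ℓ ∧ memNk (d - 1) m ∧ m ≤ ℓ

/-- The function `X̃^d_{ℓ,m}`. -/
noncomputable def Xtilde (d : ℕ) (ℓ m x : ℝ) : ℝ :=
  (1 - x ^ 2) ^ (-((d : ℝ) - 2) / 4) * Yfun ℓ m x

/-- The dimension `D_k(m)` of spherical harmonics, as a function of `k` and of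
`m' = m - (k-1)/2 ∈ ℕ`, with the convention that a binomial coefficient with
negative lower index is zero. -/
noncomputable def Dk (k : ℕ) (m' : ℕ) : ℝ :=
  (Nat.choose (m' + k) m' : ℝ) -
    (if 2 ≤ m' then (Nat.choose (m' + k - 2) (m' - 2) : ℝ) else 0)

/-- The surface measure `σ_k` of the unit sphere in `ℝ^{1+k}`. -/
noncomputable def sigmaS (k : ℕ) : ℝ :=
  ((k : ℝ) + 1) * Real.pi ^ (((k : ℝ) + 1) / 2) / Real.Gamma (((k : ℝ) + 3) / 2)

open Polynomial

lemma hasDerivAt_one_sub_sq (x : ℝ) : HasDerivAt (fun y : ℝ => 1 - y ^ 2) (-(2 * x)) x := by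
  simpa using (hasDerivAt_pow 2 x).const_sub 1

lemma iteratedDeriv_one_sub_rpow (p : ℝ) (k : ℕ) (x : ℝ) :
    iteratedDeriv k (fun t : ℝ => (1 - t) ^ p) x
      = (-1) ^ k * (descPochhammer ℝ k).eval p * (1 - x) ^ (p - k) := by
  rw [iteratedDeriv_comp_const_sub k (fun u : ℝ => u ^ p) 1, iteratedDeriv_eq_iterate]
  simp only [iter_deriv_rpow_const, smul_eq_mul, mul_assoc]

lemma iteratedDeriv_one_add_rpow (p : ℝ) (k : ℕ) (x : ℝ) :
    iteratedDeriv k (fun t : ℝ => (1 + t) ^ p) x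
      = (descPochhammer ℝ k).eval p * (1 + x) ^ (p - k) := by
  rw [iteratedDeriv_comp_const_add k (fun u : ℝ => u ^ p) 1, iteratedDeriv_eq_iterate]
  exact iter_deriv_rpow_const p (1 + x) k

lemma iteratedDeriv_one_sub_sq_rpow (p : ℝ) (k : ℕ) {x : ℝ} (hx : x ∈ Ioo (-1 : ℝ) 1) :
    iteratedDeriv k (fun t : ℝ => (1 - t ^ 2) ^ p) x
      = ∑ i ∈ Finset.range (k + 1), (k.choose i : ℝ) *
          ((-1) ^ i * (descPochhammer ℝ i).eval p * (1 - x) ^ (p - i)) *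
          ((descPochhammer ℝ (k - i)).eval p * (1 + x) ^ (p - (k - i : ℕ))) := by
  have hfactor : (fun t : ℝ => (1 - t ^ 2) ^ p) =ᶠ[nhds x]
      fun t => (1 - t) ^ p * (1 + t) ^ p := by
    filter_upwards [Ioo_mem_nhds hx.1 hx.2] with t ht
    rw [← Real.mul_rpow (by linarith [ht.2]) (by linarith [ht.1])]
    ring_nf
  have hsub : ContDiffAt ℝ k (fun t : ℝ => (1 - t) ^ p) x :=
    (contDiffAt_rpow_const_of_ne (by linarith [hx.2])).comp x (contDiffAt_const.sub contDiffAt_id)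
  have hadd : ContDiffAt ℝ k (fun t : ℝ => (1 + t) ^ p) x :=
    (contDiffAt_rpow_const_of_ne (by linarith [hx.1])).comp x (contDiffAt_const.add contDiffAt_id)
  rw [hfactor.iteratedDeriv_eq, iteratedDeriv_fun_mul hsub hadd]
  simp only [iteratedDeriv_one_sub_rpow, iteratedDeriv_one_add_rpow]

noncomputable def jacobiCoeff (j : ℕ) (α : ℝ) (i : ℕ) : ℝ :=
  (-1) ^ (j - i) / (2 ^ j * j.factorial) * j.choose i *
    (descPochhammer ℝ i).eval (α + j) * (descPochhammer ℝ (j - i)).eval (α + j)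

/-- Agrees with `jacobiP j α` on `(-1, 1)`, but is a polynomial on all of `ℝ`. -/
noncomputable def jacobiPoly (j : ℕ) (α : ℝ) (x : ℝ) : ℝ :=
  ∑ i ∈ Finset.range (j + 1), jacobiCoeff j α i * (1 - x) ^ (j - i) * (1 + x) ^ i

lemma rpow_neg_mul_rpow_add_natCast {u : ℝ} (hu : 0 < u) (α : ℝ) (n : ℕ) :
    u ^ (-α) * u ^ (α + n) = u ^ n := by
  rw [← Real.rpow_add hu, neg_add_cancel_left, Real.rpow_natCast]

lemma jacobiP_eq_jacobiPoly (j : ℕ) (α : ℝ) {x : ℝ} (hx : x ∈ Ioo (-1 : ℝ) 1) :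
    jacobiP j α x = jacobiPoly j α x := by
  have hsub : 0 < 1 - x := by linarith [hx.2]
  have hadd : 0 < 1 + x := by linarith [hx.1]
  rw [jacobiP, iteratedDeriv_one_sub_sq_rpow _ _ hx, jacobiPoly, Finset.mul_sum]
  refine Finset.sum_congr rfl fun i hi => ?_
  have hij : i ≤ j := Nat.lt_succ_iff.mp (Finset.mem_range.mp hi)
  have hsign : (-1 : ℝ) ^ j * (-1) ^ i = (-1) ^ (j - i) := by
    rw [← Nat.sub_add_cancel hij, pow_add, Nat.add_sub_cancel, mul_assoc, ← pow_add,
      Even.neg_one_pow ⟨i, rfl⟩, mul_one]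
  have hpow_sub := rpow_neg_mul_rpow_add_natCast hsub α (j - i)
  have hpow_add := rpow_neg_mul_rpow_add_natCast hadd α i
  rw [Nat.cast_sub hij] at hpow_sub ⊢
  rw [show (1 : ℝ) - x ^ 2 = (1 - x) * (1 + x) by ring, Real.mul_rpow hsub.le hadd.le,
    show α + j - i = α + (j - i : ℝ) by ring, show α + j - (j - i : ℝ) = α + i by ring,
    jacobiCoeff, ← hsign, ← hpow_sub, ← hpow_add]
  ring

lemma jacobiCoeff_raise (j i : ℕ) (α : ℝ) (hij : i ≤ j) :
    jacobiCoeff (j + 1) α i * (-((j + 1 - i : ℕ) : ℝ))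
        + jacobiCoeff (j + 1) α (i + 1) * (i + 1)
      = (2 * α + j + 2) / 2 * jacobiCoeff j (α + 1) i := by
  obtain ⟨q, rfl⟩ : ∃ q, j = i + q := ⟨j - i, (Nat.add_sub_cancel' hij).symm⟩
  have hchoose_left : ((i + q + 1).choose i : ℝ) * (q + 1) = (i + q + 1) * (i + q).choose i := by
    have h := Nat.choose_mul_succ_eq (i + q) i
    rw [show i + q + 1 - i = q + 1 by omega] at h
    exact_mod_cast h.symm.trans (mul_comm _ _)
  have hchoose_right :
      ((i : ℝ) + 1) * (i + q + 1).choose (i + 1) = (i + q + 1) * (i + q).choose i := by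
    exact_mod_cast (mul_comm _ _).trans (Nat.add_one_mul_choose_eq (i + q) i).symm
  set p : ℝ := α + (i + q + 1)
  have hcomb : ((i + q + 1).choose i : ℝ) * (q + 1) * (p - q)
        + ((i + q + 1).choose (i + 1) : ℝ) * (i + 1) * (p - i)
      = (i + q + 1) * (i + q).choose i * (2 * α + i + q + 2) := by
    linear_combination (p - q) * hchoose_left + (p - i) * hchoose_right
  simp only [jacobiCoeff, Nat.add_sub_cancel_left, show i + q + 1 - i = q + 1 by omega,
    show i + q + 1 - (i + 1) = q by omega, descPochhammer_succ_eval, Nat.factorial_succ, pow_succ]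
  rw [show α + 1 + ((i + q : ℕ) : ℝ) = p by push_cast; ring,
    show α + ((i + q + 1 : ℕ) : ℝ) = p by push_cast; ring]
  push_cast
  field_simp
  linear_combination ((descPochhammer ℝ i).eval p * (descPochhammer ℝ q).eval p) * hcomb

lemma hasDerivAt_monomial_one_sub_one_add (c : ℝ) (a b : ℕ) (x : ℝ) :
    HasDerivAt (fun y : ℝ => c * (1 - y) ^ a * (1 + y) ^ b)
      (c * (-(a : ℝ) * (1 - x) ^ (a - 1) * (1 + x) ^ b
        + b * (1 - x) ^ a * (1 + x) ^ (b - 1))) x := by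
  have hsub : HasDerivAt (fun y : ℝ => 1 - y) (-1) x := by
    simpa using (hasDerivAt_id x).const_sub 1
  have hadd : HasDerivAt (fun y : ℝ => 1 + y) 1 x := by
    simpa using (hasDerivAt_id x).const_add 1
  refine (((hsub.pow a).const_mul c).mul (hadd.pow b)).congr_deriv ?_
  simp only [Pi.pow_apply]
  ring

lemma hasDerivAt_jacobiPoly_sum (j : ℕ) (α x : ℝ) :
    HasDerivAt (jacobiPoly j α)
      (∑ i ∈ Finset.range (j + 1), jacobiCoeff j α i *
        (-((j - i : ℕ) : ℝ) * (1 - x) ^ (j - i - 1) * (1 + x) ^ i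
          + i * (1 - x) ^ (j - i) * (1 + x) ^ (i - 1))) x := by
  unfold jacobiPoly
  exact HasDerivAt.fun_sum fun i _ => hasDerivAt_monomial_one_sub_one_add _ (j - i) i x

lemma differentiable_jacobiPoly (j : ℕ) (α : ℝ) : Differentiable ℝ (jacobiPoly j α) :=
  fun x => (hasDerivAt_jacobiPoly_sum j α x).differentiableAt

lemma hasDerivAt_jacobiPoly (j : ℕ) (α x : ℝ) :
    HasDerivAt (jacobiPoly (j + 1) α) ((2 * α + j + 2) / 2 * jacobiPoly j (α + 1) x) x := by
  convert hasDerivAt_jacobiPoly_sum (j + 1) α x using 1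
  rw [jacobiPoly, Finset.mul_sum]
  simp only [mul_add, Finset.sum_add_distrib]
  rw [Finset.sum_range_succ (fun i => jacobiCoeff (j + 1) α i *
      (-((j + 1 - i : ℕ) : ℝ) * (1 - x) ^ (j + 1 - i - 1) * (1 + x) ^ i)),
    Finset.sum_range_succ' (fun i => jacobiCoeff (j + 1) α i *
      (i * (1 - x) ^ (j + 1 - i) * (1 + x) ^ (i - 1))), add_add_add_comm,
    ← Finset.sum_add_distrib]
  simp only [Nat.sub_self, Nat.cast_zero, neg_zero, zero_mul, mul_zero, add_zero]
  refine Finset.sum_congr rfl fun i hi => ?_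
  have hij : i ≤ j := Nat.lt_succ_iff.mp (Finset.mem_range.mp hi)
  have key := jacobiCoeff_raise j i α hij
  rw [show j + 1 - i - 1 = j - i by omega, show j + 1 - (i + 1) = j - i by omega,
    Nat.add_sub_cancel]
  push_cast
  linear_combination (-(1 - x) ^ (j - i) * (1 + x) ^ i) * key

lemma iteratedDeriv_one_sub_sq_rpow_eq_jacobiPoly (j : ℕ) (α : ℝ) {x : ℝ}
    (hx : x ∈ Ioo (-1 : ℝ) 1) :
    iteratedDeriv j (fun t : ℝ => (1 - t ^ 2) ^ (α + j)) x
      = (-2) ^ j * j.factorial * ((1 - x ^ 2) ^ α * jacobiPoly j α x) := by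
  have hs : 0 < 1 - x ^ 2 := by nlinarith [hx.1, hx.2]
  have hcancel : (1 - x ^ 2) ^ α * (1 - x ^ 2) ^ (-α) = 1 := by
    rw [← Real.rpow_add hs, add_neg_cancel, Real.rpow_zero]
  have hsign : (-2 : ℝ) ^ j * (-1) ^ j = 2 ^ j := by
    rw [← mul_pow]; norm_num
  have hfac : (j.factorial : ℝ) ≠ 0 := by positivity
  rw [← jacobiP_eq_jacobiPoly j α hx, jacobiP]
  calc _ = (-2) ^ j * (-1) ^ j / 2 ^ j * ((1 - x ^ 2) ^ α * (1 - x ^ 2) ^ (-α)) *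
        iteratedDeriv j (fun t : ℝ => (1 - t ^ 2) ^ (α + j)) x := by
        rw [hsign, hcancel, div_self (by positivity), one_mul, one_mul]
    _ = _ := by field_simp

lemma hasDerivAt_rpow_mul_jacobiPoly (j : ℕ) (α : ℝ) {x : ℝ} (hx : x ∈ Ioo (-1 : ℝ) 1) :
    HasDerivAt (fun y => (1 - y ^ 2) ^ α * jacobiPoly j α y)
      (-2 * (j + 1) * ((1 - x ^ 2) ^ (α - 1) * jacobiPoly (j + 1) (α - 1) x)) x := by
  set f : ℝ → ℝ := fun t => (1 - t ^ 2) ^ (α + j)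
  set c : ℝ := (-2) ^ j * j.factorial
  have hc : c ≠ 0 := by positivity
  have hloc : iteratedDeriv j f =ᶠ[nhds x]
      fun y => c * ((1 - y ^ 2) ^ α * jacobiPoly j α y) := by
    filter_upwards [Ioo_mem_nhds hx.1 hx.2] with y hy
    exact iteratedDeriv_one_sub_sq_rpow_eq_jacobiPoly j α hy
  have hs : 0 < 1 - x ^ 2 := by nlinarith [hx.1, hx.2]
  have hdiff : DifferentiableAt ℝ (fun y => (1 - y ^ 2) ^ α * jacobiPoly j α y) x := by
    have hbase : DifferentiableAt ℝ (fun y : ℝ => 1 - y ^ 2) x := by fun_prop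
    exact (hbase.rpow_const (Or.inl hs.ne')).mul (differentiable_jacobiPoly j α x)
  have hD : HasDerivAt (iteratedDeriv j f) (iteratedDeriv (j + 1) f x) x := by
    rw [iteratedDeriv_succ]
    exact ((hdiff.const_mul c).congr_of_eventuallyEq hloc).hasDerivAt
  have hval : iteratedDeriv (j + 1) f x
      = (-2) ^ (j + 1) * (j + 1).factorial *
          ((1 - x ^ 2) ^ (α - 1) * jacobiPoly (j + 1) (α - 1) x) := by
    rw [← iteratedDeriv_one_sub_sq_rpow_eq_jacobiPoly (j + 1) (α - 1) hx]
    congr 2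
    ext t
    simp only [f]
    push_cast
    ring_nf
  have hloc' : (fun y => (1 - y ^ 2) ^ α * jacobiPoly j α y) =ᶠ[nhds x]
      fun y => c⁻¹ * iteratedDeriv j f y := by
    filter_upwards [hloc] with y hy
    rw [hy, inv_mul_cancel_left₀ hc]
  refine ((hD.const_mul c⁻¹).congr_of_eventuallyEq hloc').congr_deriv ?_
  rw [hval, Nat.factorial_succ, pow_succ]
  push_cast
  simp only [c]
  field_simp

lemma jacobiPoly_lowering (j : ℕ) (α : ℝ) {x : ℝ} (hx : x ∈ Ioo (-1 : ℝ) 1) :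
    (1 - x ^ 2) * ((2 * α + j + 2) / 2 * jacobiPoly j (α + 1) x)
      = 2 * α * x * jacobiPoly (j + 1) α x - 2 * (j + 2) * jacobiPoly (j + 2) (α - 1) x := by
  have hs : 0 < 1 - x ^ 2 := by nlinarith [hx.1, hx.2]
  have hweight := (hasDerivAt_one_sub_sq x).rpow_const (p := α) (Or.inl hs.ne')
  have huniq := (hasDerivAt_rpow_mul_jacobiPoly (j + 1) α hx).unique
    (hweight.mul (hasDerivAt_jacobiPoly j α x))
  have hsplit : (1 - x ^ 2) ^ α = (1 - x ^ 2) ^ (α - 1) * (1 - x ^ 2) := by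
    rw [← Real.rpow_add_one hs.ne', sub_add_cancel]
  rw [hsplit] at huniq
  push_cast at huniq
  refine mul_left_cancel₀ (Real.rpow_pos_of_pos hs (α - 1)).ne' ?_
  linear_combination -huniq

@[simp]
lemma jacobiPoly_zero (α x : ℝ) : jacobiPoly 0 α x = 1 := by
  simp [jacobiPoly, jacobiCoeff]

lemma jacobiPoly_one (α x : ℝ) : jacobiPoly 1 α x = (α + 1) * x := by
  simp only [jacobiPoly, jacobiCoeff, Finset.sum_range_succ, Finset.range_one,
    Finset.sum_singleton, Nat.reduceAdd, Nat.factorial_one, Nat.cast_one, Nat.choose_succ_self_right,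
    Nat.choose_self, tsub_zero, tsub_self, descPochhammer_zero, descPochhammer_one, eval_one, eval_X,
    pow_zero, pow_one, mul_one, zero_add, one_div]
  ring

lemma jacobiPoly_apply_one (j : ℕ) (α : ℝ) :
    jacobiPoly j α 1 = (descPochhammer ℝ j).eval (α + j) / j.factorial := by
  rw [jacobiPoly, Finset.sum_eq_single_of_mem j (Finset.self_mem_range_succ j)]
  · simp only [jacobiCoeff, tsub_self, pow_zero, one_div, mul_inv_rev, Nat.choose_self,
      Nat.cast_one, mul_one, descPochhammer_zero, eval_one, sub_self]
    field_simp
    norm_num [mul_comm]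
  · intro i hi hij
    have : j - i ≠ 0 := by have := Finset.mem_range.mp hi; omega
    simp [zero_pow this]

lemma descPochhammer_eval_mul_Gamma (p : ℝ) (i : ℕ) (h : 0 < p + 1 - i) :
    (descPochhammer ℝ i).eval p * Real.Gamma (p + 1 - i) = Real.Gamma (p + 1) := by
  induction i with
  | zero => simp
  | succ i ih =>
    push_cast at h
    rw [descPochhammer_succ_eval, mul_assoc,
      show p + 1 - ((i + 1 : ℕ) : ℝ) = p - i by push_cast; ring,
      ← Real.Gamma_add_one (by linarith),
      show p - i + 1 = p + 1 - i by ring, ih (by linarith)]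

lemma jacobiPoly_apply_one_eq_Gamma (n : ℕ) {γ : ℝ} (hγ : -1 < γ) :
    jacobiPoly n γ 1 = Real.Gamma (n + γ + 1) / (Real.Gamma (γ + 1) * n.factorial) := by
  have h := descPochhammer_eval_mul_Gamma (γ + n) n (by linarith)
  rw [show γ + n + 1 - n = γ + 1 by ring, show γ + n + 1 = n + γ + 1 by ring] at h
  have := Real.Gamma_pos_of_pos (by linarith : 0 < γ + 1)
  rw [jacobiPoly_apply_one, ← h, add_comm γ]
  field_simp

section AdditionTheorem

variable (γ : ℝ) (n : ℕ) (K : ℕ → ℝ)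

noncomputable def weightedJacobiSq (b : ℕ) (x : ℝ) : ℝ :=
  K b * ((1 - x ^ 2) ^ b * jacobiPoly (n - b) (b + γ) x ^ 2)

/-- Under the recurrences on `K` assumed below, the derivative of `weightedJacobiSq γ n K b` is
`weightedJacobiCross γ n K (b + 1) - weightedJacobiCross γ n K b`. At `b = 0` the truncated
exponent `b - 1` is harmless, as the factor `b` vanishes. -/
noncomputable def weightedJacobiCross (b : ℕ) (x : ℝ) : ℝ :=
  2 * b * (n - b + 1) * K b / (b + γ) * (1 - x ^ 2) ^ (b - 1) *
    jacobiPoly (n + 1 - b) (b + γ - 1) x * jacobiPoly (n - b) (b + γ) x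

lemma weightedJacobiCross_zero (x : ℝ) : weightedJacobiCross γ n K 0 x = 0 := by
  simp [weightedJacobiCross]

lemma weightedJacobiCross_succ_self (x : ℝ) : weightedJacobiCross γ n K (n + 1) x = 0 := by
  simp only [weightedJacobiCross, Nat.cast_add_one, sub_add_cancel_left, neg_add_cancel,
    mul_zero, zero_mul, zero_div]

variable {γ}

lemma hasDerivAt_weightedJacobiSq_self (hγ : -1 < γ) (x : ℝ) :
    HasDerivAt (weightedJacobiSq γ n K n)
      (weightedJacobiCross γ n K (n + 1) x - weightedJacobiCross γ n K n x) x := by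
  have hfun : weightedJacobiSq γ n K n = fun y => K n * (1 - y ^ 2) ^ n := by
    ext y; simp [weightedJacobiSq]
  rw [hfun, weightedJacobiCross_succ_self]
  refine (((hasDerivAt_one_sub_sq x).pow n).const_mul (K n)).congr_deriv ?_
  simp only [weightedJacobiCross, Nat.sub_self, jacobiPoly_zero, Nat.add_sub_cancel_left,
    jacobiPoly_one]
  rcases Nat.eq_zero_or_pos n with rfl | hn
  · simp
  · have : (n : ℝ) + γ ≠ 0 := by
      have : (1 : ℝ) ≤ n := by exact_mod_cast hn
      linarith
    field_simp
    ring

lemma hasDerivAt_jacobiPoly_sub {b : ℕ} (hb : b < n) (x : ℝ) :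
    HasDerivAt (jacobiPoly (n - b) (b + γ))
      ((n + b + 2 * γ + 1) / 2 * jacobiPoly (n - (b + 1)) ((b + 1 : ℕ) + γ) x) x := by
  have h := hasDerivAt_jacobiPoly (n - (b + 1)) (b + γ) x
  rw [show n - (b + 1) + 1 = n - b by omega, Nat.cast_sub (by omega : b + 1 ≤ n)] at h
  convert h using 2
  · push_cast; ring
  · push_cast; ring_nf

lemma hasDerivAt_weightedJacobiSq_of_lt {b : ℕ} (hb : b < n) (x : ℝ) :
    HasDerivAt (weightedJacobiSq γ n K b)
      (K b * (b * (1 - x ^ 2) ^ (b - 1) * -(2 * x) * jacobiPoly (n - b) (b + γ) x ^ 2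
        + (1 - x ^ 2) ^ b * ((n + b + 2 * γ + 1) * jacobiPoly (n - b) (b + γ) x *
            jacobiPoly (n - (b + 1)) ((b + 1 : ℕ) + γ) x))) x := by
  refine ((((hasDerivAt_one_sub_sq x).pow b).mul
    ((hasDerivAt_jacobiPoly_sub n hb x).pow 2)).const_mul (K b)).congr_deriv ?_
  simp only [Pi.pow_apply]
  push_cast
  ring

lemma hasDerivAt_weightedJacobiSq_zero (hγ : -1 < γ) (hn : 0 < n)
    (hK : (γ + 1) * (n + 2 * γ + 1) * K 0 = 2 * n * K 1) (x : ℝ) :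
    HasDerivAt (weightedJacobiSq γ n K 0)
      (weightedJacobiCross γ n K 1 x - weightedJacobiCross γ n K 0 x) x := by
  convert hasDerivAt_weightedJacobiSq_of_lt n K hn x using 1
  simp only [weightedJacobiCross, Nat.cast_zero, Nat.cast_one, zero_add, Nat.sub_zero,
    Nat.sub_self, Nat.add_sub_cancel, pow_zero, add_sub_cancel_left, zero_mul, mul_zero, zero_div,
    sub_zero, one_mul, mul_one, sub_add_cancel]
  have : 1 + γ ≠ 0 := by linarith
  field_simp
  linear_combination (-(jacobiPoly n γ x * jacobiPoly (n - 1) (1 + γ) x)) * hK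

lemma hasDerivAt_weightedJacobiSq_of_pos (hγ : -1 < γ) {b : ℕ} (hb₁ : 1 ≤ b) (hb : b < n)
    (hK : (b + 2 * γ) * (n + b + 2 * γ + 1) * (b + γ + 1) * K b
      = 4 * (b + 1) * (n - b) * (b + γ) * K (b + 1))
    {x : ℝ} (hx : x ∈ Ioo (-1 : ℝ) 1) :
    HasDerivAt (weightedJacobiSq γ n K b)
      (weightedJacobiCross γ n K (b + 1) x - weightedJacobiCross γ n K b x) x := by
  obtain ⟨b, rfl⟩ : ∃ c, b = c + 1 := ⟨b - 1, by omega⟩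
  obtain ⟨m, rfl⟩ : ∃ m, n = b + 2 + m := ⟨n - (b + 2), by omega⟩
  have hlow := jacobiPoly_lowering m ((b + 1 : ℕ) + γ) hx
  convert hasDerivAt_weightedJacobiSq_of_lt (b + 2 + m) K hb x using 1
  simp only [weightedJacobiCross, show b + 2 + m - (b + 1) = m + 1 by omega,
    show b + 2 + m + 1 - (b + 1 + 1) = m + 1 by omega, show b + 2 + m - (b + 1 + 1) = m by omega,
    show b + 2 + m + 1 - (b + 1) = m + 2 by omega, Nat.add_sub_cancel] at hlow ⊢
  push_cast at hlow hK ⊢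
  have hA : (b : ℝ) + 1 + γ ≠ 0 := by have := (b.cast_nonneg : (0 : ℝ) ≤ b); linarith
  have hA' : (b : ℝ) + 1 + 1 + γ ≠ 0 := by have := (b.cast_nonneg : (0 : ℝ) ≤ b); linarith
  rw [show (b : ℝ) + 1 + γ + 1 = b + 1 + 1 + γ by ring] at hlow
  rw [show (b : ℝ) + 1 + 1 + γ - 1 = b + 1 + γ by ring, pow_succ]
  field_simp
  linear_combination (-((1 - x ^ 2) ^ b * (1 - x ^ 2) * jacobiPoly (m + 1) (b + 1 + γ) x *
      jacobiPoly m (b + 1 + 1 + γ) x / 2)) * hK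
    + (-((b : ℝ) + 1) * (1 - x ^ 2) ^ b * jacobiPoly (m + 1) (b + 1 + γ) x * (b + 1 + 1 + γ) *
      K (b + 1)) * hlow

lemma hasDerivAt_sum_weightedJacobiSq (hγ : -1 < γ)
    (hK₀ : 0 < n → (γ + 1) * (n + 2 * γ + 1) * K 0 = 2 * n * K 1)
    (hK : ∀ b, 1 ≤ b → b < n → (b + 2 * γ) * (n + b + 2 * γ + 1) * (b + γ + 1) * K b
      = 4 * (b + 1) * (n - b) * (b + γ) * K (b + 1))
    {x : ℝ} (hx : x ∈ Ioo (-1 : ℝ) 1) :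
    HasDerivAt (fun y => ∑ b ∈ Finset.range (n + 1), weightedJacobiSq γ n K b y) 0 x := by
  have hterm : ∀ b ∈ Finset.range (n + 1), HasDerivAt (weightedJacobiSq γ n K b)
      (weightedJacobiCross γ n K (b + 1) x - weightedJacobiCross γ n K b x) x := by
    intro b hb
    have hbn : b ≤ n := Nat.lt_succ_iff.mp (Finset.mem_range.mp hb)
    rcases hbn.eq_or_lt with rfl | hlt
    · exact hasDerivAt_weightedJacobiSq_self b K hγ x
    rcases Nat.eq_zero_or_pos b with rfl | hb₁
    · exact hasDerivAt_weightedJacobiSq_zero n K hγ hlt (hK₀ hlt) x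
    · exact hasDerivAt_weightedJacobiSq_of_pos n K hγ hb₁ hlt (hK b hb₁ hlt) hx
  have hsum := HasDerivAt.fun_sum hterm
  rwa [Finset.sum_range_sub (fun b => weightedJacobiCross γ n K b x),
    weightedJacobiCross_succ_self, weightedJacobiCross_zero, sub_zero] at hsum

lemma continuous_weightedJacobiSq (b : ℕ) : Continuous (weightedJacobiSq γ n K b) := by
  have := (differentiable_jacobiPoly (n - b) (b + γ)).continuous
  unfold weightedJacobiSq
  fun_prop

theorem sum_weightedJacobiSq_eq (hγ : -1 < γ)
    (hK₀ : 0 < n → (γ + 1) * (n + 2 * γ + 1) * K 0 = 2 * n * K 1)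
    (hK : ∀ b, 1 ≤ b → b < n → (b + 2 * γ) * (n + b + 2 * γ + 1) * (b + γ + 1) * K b
      = 4 * (b + 1) * (n - b) * (b + γ) * K (b + 1))
    {x : ℝ} (hx : x ∈ Ioo (-1 : ℝ) 1) :
    ∑ b ∈ Finset.range (n + 1), weightedJacobiSq γ n K b x = K 0 * jacobiPoly n γ 1 ^ 2 := by
  set F := fun y => ∑ b ∈ Finset.range (n + 1), weightedJacobiSq γ n K b y
  have hconst := constant_of_has_deriv_right_zero (f := F) (a := x) (b := 1)
    (continuous_finsetSum _ fun b _ => continuous_weightedJacobiSq n K b).continuousOn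
    (fun y hy => (hasDerivAt_sum_weightedJacobiSq n K hγ hK₀ hK
      ⟨by linarith [hx.1, hy.1], hy.2⟩).hasDerivWithinAt) 1 ⟨hx.2.le, le_rfl⟩
  change F x = _
  rw [← hconst]
  simp only [F]
  rw [Finset.sum_eq_single_of_mem 0 (by simp)]
  · simp [weightedJacobiSq]
  · intro b _ hb
    simp [weightedJacobiSq, zero_pow hb]

end AdditionTheorem

lemma cConst_sq {ℓ m : ℝ}
    (h : 0 ≤ ℓ * Real.Gamma (ℓ - m + 1/2) * Real.Gamma (ℓ + m + 1/2)) :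
    cConst ℓ m ^ 2 = ℓ * Real.Gamma (ℓ - m + 1/2) * Real.Gamma (ℓ + m + 1/2) /
      ((2 : ℝ) ^ m * Real.Gamma (ℓ + 1/2)) ^ 2 := by
  rw [cConst, div_pow, Real.sq_sqrt h]

lemma cConst_sq_succ {ℓ m : ℝ} (hℓ : 0 ≤ ℓ) (hlow : 0 < ℓ - m - 1/2)
    (hhigh : 0 < ℓ + m + 1/2) :
    4 * (ℓ - m - 1/2) * cConst ℓ (m + 1) ^ 2 = (ℓ + m + 1/2) * cConst ℓ m ^ 2 := by
  have hΓlow := Real.Gamma_pos_of_pos hlow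
  have hΓhigh := Real.Gamma_pos_of_pos hhigh
  have hΓℓ := Real.Gamma_pos_of_pos (by linarith : 0 < ℓ + 1/2)
  have hsub : Real.Gamma (ℓ - m + 1/2) = (ℓ - m - 1/2) * Real.Gamma (ℓ - m - 1/2) := by
    rw [← Real.Gamma_add_one hlow.ne']; ring_nf
  have hadd : Real.Gamma (ℓ + (m + 1) + 1/2) = (ℓ + m + 1/2) * Real.Gamma (ℓ + m + 1/2) := by
    rw [← Real.Gamma_add_one hhigh.ne']; ring_nf
  have hshift : ℓ - (m + 1) + 1/2 = ℓ - m - 1/2 := by ring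
  rw [cConst_sq (by rw [hshift, hadd]; positivity), cConst_sq (by rw [hsub]; positivity), hsub,
    hadd, hshift, Real.rpow_add_one two_ne_zero]
  field_simp
  ring

@[simp]
lemma Dk_zero (k : ℕ) : Dk k 0 = 1 := by simp [Dk]

lemma Dk_one (k : ℕ) : Dk k 1 = k + 1 := by
  simp [Dk, add_comm]

lemma Dk_eq_factorial {k b : ℕ} (hk : 1 ≤ k) (hbk : 2 ≤ b + k) :
    Dk k b = (2 * b + k - 1) * (b + k - 2).factorial / (b.factorial * (k - 1).factorial) := by
  obtain ⟨k, rfl⟩ : ∃ k', k = k' + 1 := ⟨k - 1, by omega⟩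
  rw [Nat.add_sub_cancel]
  match b, hbk with
  | 0, hbk =>
    obtain ⟨k, rfl⟩ : ∃ k', k = k' + 1 := ⟨k - 1, by omega⟩
    rw [Dk_zero, show 0 + (k + 1 + 1) - 2 = k by omega, Nat.factorial_succ]
    push_cast
    field_simp
    ring
  | 1, _ =>
    rw [Dk_one, show 1 + (k + 1) - 2 = k by omega]
    push_cast
    field_simp
    ring
  | c + 2, _ =>
    rw [Dk, if_pos (by omega), show c + 2 + (k + 1) - 2 = c + (k + 1) by omega,
      show c + 2 - 2 = c by omega, Nat.cast_choose ℝ (by omega : c + 2 ≤ c + 2 + (k + 1)),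
      Nat.cast_choose ℝ (by omega : c ≤ c + (k + 1)),
      show c + 2 + (k + 1) - (c + 2) = k + 1 by omega,
      show c + (k + 1) - c = k + 1 by omega, show c + 2 + (k + 1) = c + (k + 1) + 1 + 1 by omega]
    simp only [Nat.factorial_succ]
    push_cast
    field_simp
    ring

lemma Dk_succ_recurrence {k b : ℕ} (hk : 1 ≤ k) (hb : 1 ≤ b) :
    ((b : ℝ) + k - 1) * (2 * b + k + 1) * Dk k b = (b + 1) * (2 * b + k - 1) * Dk k (b + 1) := by
  rw [Dk_eq_factorial hk (by omega), Dk_eq_factorial hk (by omega),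
    show b + 1 + k - 2 = (b + k - 2) + 1 by omega, Nat.factorial_succ, Nat.factorial_succ]
  have : ((b + k - 2 : ℕ) : ℝ) = b + k - 2 := by rw [Nat.cast_sub (by omega)]; push_cast; ring
  push_cast [this]
  field_simp
  ring

lemma Yfun_sq (ℓ m : ℝ) {x : ℝ} (hx : x ∈ Ioo (-1 : ℝ) 1) :
    Yfun ℓ m x ^ 2
      = cConst ℓ m ^ 2 * (1 - x ^ 2) ^ m * jacobiPoly ⌊ℓ - m - 1/2⌋₊ m x ^ 2 := by
  have hs : 0 ≤ 1 - x ^ 2 := by nlinarith [hx.1, hx.2]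
  rw [Yfun, jacobiP_eq_jacobiPoly _ _ hx, mul_pow, mul_pow,
    ← Real.rpow_natCast ((1 - x ^ 2) ^ _) 2, ← Real.rpow_mul hs]
  norm_num

noncomputable def additionCoeff (d n b : ℕ) : ℝ :=
  cConst ((n : ℝ) + ((d : ℝ) - 1) / 2) ((b : ℝ) + ((d : ℝ) - 2) / 2) ^ 2 * Dk (d - 1) b /
    sigmaS (d - 1)

lemma summand_eq_weightedJacobiSq {d n b : ℕ} (hb : b ≤ n) {x : ℝ}
    (hx : x ∈ Ioo (-1 : ℝ) 1) :
    (1 - x ^ 2) ^ (-((d : ℝ) - 2) / 2) *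
        Yfun ((n : ℝ) + ((d : ℝ) - 1) / 2) ((b : ℝ) + ((d : ℝ) - 2) / 2) x ^ 2 *
        Dk (d - 1) b / sigmaS (d - 1)
      = weightedJacobiSq (((d : ℝ) - 2) / 2) n (additionCoeff d n) b x := by
  have hs : 0 < 1 - x ^ 2 := by nlinarith [hx.1, hx.2]
  have hdeg : (n : ℝ) + ((d : ℝ) - 1) / 2 - ((b : ℝ) + ((d : ℝ) - 2) / 2) - 1/2
      = (n - b : ℕ) := by
    rw [Nat.cast_sub hb]; ring
  have hweight := rpow_neg_mul_rpow_add_natCast hs (((d : ℝ) - 2) / 2) b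
  rw [Yfun_sq _ _ hx, hdeg, Nat.floor_natCast, weightedJacobiSq, additionCoeff, neg_div,
    add_comm (b : ℝ)]
  linear_combination (cConst ((n : ℝ) + ((d : ℝ) - 1) / 2) ((((d : ℝ) - 2) / 2) + b) ^ 2 *
    jacobiPoly (n - b) ((((d : ℝ) - 2) / 2) + b) x ^ 2 * Dk (d - 1) b / sigmaS (d - 1)) * hweight

lemma cConst_sq_succ_index {d n b : ℕ} (hd : 1 ≤ d) (hb : b < n) :
    4 * (n - b) *
        cConst ((n : ℝ) + ((d : ℝ) - 1) / 2) (((b + 1 : ℕ) : ℝ) + ((d : ℝ) - 2) / 2) ^ 2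
      = (n + b + d - 1) *
        cConst ((n : ℝ) + ((d : ℝ) - 1) / 2) ((b : ℝ) + ((d : ℝ) - 2) / 2) ^ 2 := by
  have hd' : (1 : ℝ) ≤ d := by exact_mod_cast hd
  have hbn : (b : ℝ) + 1 ≤ n := by exact_mod_cast hb
  have h := cConst_sq_succ (ℓ := (n : ℝ) + ((d : ℝ) - 1) / 2)
    (m := (b : ℝ) + ((d : ℝ) - 2) / 2)
    (by positivity) (by linarith) (by linarith [b.cast_nonneg (α := ℝ)])
  push_cast
  rw [show (b : ℝ) + 1 + ((d : ℝ) - 2) / 2 = (b : ℝ) + ((d : ℝ) - 2) / 2 + 1 by ring]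
  linear_combination h

lemma additionCoeff_one {d n : ℕ} (hd : 1 ≤ d) (hn : 0 < n) :
    d * (n + d - 1) * additionCoeff d n 0 = 4 * n * additionCoeff d n 1 := by
  have hc := cConst_sq_succ_index hd hn
  simp only [additionCoeff, Dk_zero, Dk_one, Nat.cast_sub hd, zero_add, Nat.cast_zero, sub_zero,
    add_zero] at hc ⊢
  push_cast at hc ⊢
  linear_combination (-(d : ℝ) / sigmaS (d - 1)) * hc

lemma additionCoeff_succ {d n b : ℕ} (hd : 2 ≤ d) (hb₁ : 1 ≤ b) (hb : b < n) :
    (b + d - 2) * (n + b + d - 1) * (2 * b + d) * additionCoeff d n b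
      = 4 * (b + 1) * (n - b) * (2 * b + d - 2) * additionCoeff d n (b + 1) := by
  have hc := cConst_sq_succ_index (d := d) (by omega) hb
  have hD := Dk_succ_recurrence (k := d - 1) (by omega) hb₁
  rw [Nat.cast_sub (by omega : 1 ≤ d)] at hD
  simp only [additionCoeff]
  linear_combination ((n + b + d - 1) * cConst ((n : ℝ) + ((d : ℝ) - 1) / 2)
      ((b : ℝ) + ((d : ℝ) - 2) / 2) ^ 2 / sigmaS (d - 1)) * hD
    - ((b + 1) * (2 * b + d - 2) * Dk (d - 1) (b + 1) / sigmaS (d - 1)) * hc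

lemma Gamma_half_mul_Gamma_half_add_half {d : ℕ} (hd : 1 ≤ d) :
    Real.Gamma ((d : ℝ) / 2) * Real.Gamma (((d : ℝ) + 1) / 2)
      = (d - 1).factorial * 2 ^ (1 - (d : ℝ)) * Real.sqrt Real.pi := by
  have h := Real.Gamma_mul_Gamma_add_half ((d : ℝ) / 2)
  rw [show 2 * ((d : ℝ) / 2) = (d - 1 : ℕ) + 1 by rw [Nat.cast_sub hd]; push_cast; ring,
    Real.Gamma_nat_eq_factorial, Nat.cast_sub hd, Nat.cast_one, sub_add_cancel] at h
  rw [← h]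
  ring_nf

lemma sigmaS_eq (k : ℕ) :
    sigmaS k = 2 * Real.pi ^ (((k : ℝ) + 1) / 2) / Real.Gamma (((k : ℝ) + 1) / 2) := by
  rw [sigmaS, show ((k : ℝ) + 3) / 2 = ((k : ℝ) + 1) / 2 + 1 by ring,
    Real.Gamma_add_one (by positivity)]
  have := Real.Gamma_pos_of_pos (by positivity : (0 : ℝ) < ((k : ℝ) + 1) / 2)
  field_simp

lemma cConst_sq_zero_index {d : ℕ} (hd : 2 ≤ d) (n : ℕ) :
    cConst ((n : ℝ) + ((d : ℝ) - 1) / 2) (((d : ℝ) - 2) / 2) ^ 2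
      = ((n : ℝ) + ((d : ℝ) - 1) / 2) * n.factorial * (n + d - 2).factorial /
          (2 ^ ((d : ℝ) - 2) * Real.Gamma (n + (d : ℝ) / 2) ^ 2) := by
  have hd' : (2 : ℝ) ≤ d := by exact_mod_cast hd
  have hlow : (n : ℝ) + ((d : ℝ) - 1) / 2 - ((d : ℝ) - 2) / 2 + 1/2 = (n : ℕ) + 1 := by ring
  have hhigh :
      (n : ℝ) + ((d : ℝ) - 1) / 2 + ((d : ℝ) - 2) / 2 + 1/2 = (n + d - 2 : ℕ) + 1 := by
    rw [Nat.cast_sub (by omega)]; push_cast; ring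
  have hℓ : 0 ≤ (n : ℝ) + ((d : ℝ) - 1) / 2 := add_nonneg n.cast_nonneg (by linarith)
  have h2pow : ((2 : ℝ) ^ (((d : ℝ) - 2) / 2)) ^ 2 = 2 ^ ((d : ℝ) - 2) := by
    rw [← Real.rpow_natCast, ← Real.rpow_mul zero_le_two]; norm_num
  have hpos : 0 ≤ ((n : ℝ) + ((d : ℝ) - 1) / 2) * Real.Gamma ((n : ℕ) + 1) *
      Real.Gamma ((n + d - 2 : ℕ) + 1) := by
    rw [Real.Gamma_nat_eq_factorial, Real.Gamma_nat_eq_factorial]; positivity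
  rw [cConst_sq (by rwa [hlow, hhigh]), hlow, hhigh, Real.Gamma_nat_eq_factorial,
    Real.Gamma_nat_eq_factorial, mul_pow,
    h2pow, show (n : ℝ) + ((d : ℝ) - 1) / 2 + 1/2 = n + (d : ℝ) / 2 by ring]

lemma additionCoeff_zero_mul_jacobiPoly_sq {d : ℕ} (hd : 2 ≤ d) (n : ℕ) :
    additionCoeff d n 0 * jacobiPoly n (((d : ℝ) - 2) / 2) 1 ^ 2 = Dk d n / sigmaS d := by
  have hd' : (2 : ℝ) ≤ d := by exact_mod_cast hd
  have hdup := Gamma_half_mul_Gamma_half_add_half (d := d) (by omega)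
  have h2 : (2 : ℝ) ^ (1 - (d : ℝ)) * 2 ^ ((d : ℝ) - 2) = 1 / 2 := by
    rw [← Real.rpow_add two_pos]; norm_num
  rw [additionCoeff, Dk_zero, Nat.cast_zero, zero_add, cConst_sq_zero_index hd,
    jacobiPoly_apply_one_eq_Gamma n (by linarith), Dk_eq_factorial (by omega) (by omega),
    sigmaS_eq, sigmaS_eq, Nat.cast_sub (by omega), Nat.cast_one, sub_add_cancel,
    show (n : ℝ) + ((d : ℝ) - 2) / 2 + 1 = n + (d : ℝ) / 2 by ring,
    show ((d : ℝ) - 2) / 2 + 1 = (d : ℝ) / 2 by ring,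
    show ((d : ℝ) + 1) / 2 = (d : ℝ) / 2 + 1 / 2 by ring, Real.rpow_add Real.pi_pos,
    ← Real.sqrt_eq_rpow, ← show ((d : ℝ) + 1) / 2 = (d : ℝ) / 2 + 1 / 2 by ring]
  have := Real.Gamma_pos_of_pos (by positivity : (0 : ℝ) < (d : ℝ) / 2)
  have := Real.Gamma_pos_of_pos (by positivity : (0 : ℝ) < ((d : ℝ) + 1) / 2)
  have := Real.Gamma_pos_of_pos (by positivity : (0 : ℝ) < n + (d : ℝ) / 2)
  have := Real.rpow_pos_of_pos Real.pi_pos ((d : ℝ) / 2)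
  have := Real.rpow_pos_of_pos two_pos ((d : ℝ) - 2)
  have := Real.sqrt_pos.mpr Real.pi_pos
  field_simp
  linear_combination (-2 * 2 ^ ((d : ℝ) - 2) * (2 * n + d - 1)) * hdup
    - (2 * (2 * n + d - 1) * (d - 1).factorial * Real.sqrt Real.pi) * h2

theorem stmt17 (d : ℕ) (hd : 2 ≤ d) (ℓ' : ℕ) (x : ℝ) (hx : x ∈ Set.Ioo (-1:ℝ) 1) :
    (∑ b ∈ Finset.range (ℓ' + 1),
      (1 - x ^ 2) ^ (-((d : ℝ) - 2) / 2) *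
        Yfun ((ℓ' : ℝ) + ((d : ℝ) - 1) / 2) ((b : ℝ) + ((d : ℝ) - 2) / 2) x ^ 2 *
        Dk (d - 1) b / sigmaS (d - 1))
      = Dk d ℓ' / sigmaS d := by
  have hd' : (2 : ℝ) ≤ d := by exact_mod_cast hd
  have hK₀ (hn : 0 < ℓ') : (((d : ℝ) - 2) / 2 + 1) * (ℓ' + 2 * (((d : ℝ) - 2) / 2) + 1) *
      additionCoeff d ℓ' 0 = 2 * ℓ' * additionCoeff d ℓ' 1 := by
    linear_combination (1 / 2 : ℝ) * additionCoeff_one (d := d) (by omega) hn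
  have hK (b : ℕ) (hb₁ : 1 ≤ b) (hb : b < ℓ') :
      (b + 2 * (((d : ℝ) - 2) / 2)) * (ℓ' + b + 2 * (((d : ℝ) - 2) / 2) + 1) *
        (b + ((d : ℝ) - 2) / 2 + 1) * additionCoeff d ℓ' b
      = 4 * (b + 1) * (ℓ' - b) * (b + ((d : ℝ) - 2) / 2) * additionCoeff d ℓ' (b + 1) := by
    linear_combination (1 / 2 : ℝ) * additionCoeff_succ hd hb₁ hb
  rw [Finset.sum_congr rfl fun b hb =>
      summand_eq_weightedJacobiSq (Nat.lt_succ_iff.mp (Finset.mem_range.mp hb)) hx,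
    sum_weightedJacobiSq_eq ℓ' _ (by linarith) hK₀ hK hx,
    additionCoeff_zero_mul_jacobiPoly_sq hd]
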